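/- For all integers 0 ≤ k ≤ n, the product k_F!·(n-k)_F! of Fibonacci factorials divides the Fibonacci factorial n_F!; consequently every Fibonomial coefficient (n choose k)_F is a positive integer. -/

import Mathlib

/-- The Fibonacci factorial `n_F! = F_n·F_{n-1}⋯F_1`, with `0_F! = 1`. -/
def fibFact (n : ℕ) : ℕ := ∏ i ∈ Finset.range n, Nat.fib (i + 1)

/-- The Fibonomial coefficient `(n choose k)_F = n_F!/(k_F!·(n-k)_F!)` for
`k ≤ n`, and `0` for `k > n`. -/
def fibBinom (n k : ℕ) : ℚ :=
  if k ≤ n then (fibFact n : ℚ) / ((fibFact k : ℚ) * (fibFact (n - k) : ℚ)) else 0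

/-!
The addition formula `F_{k+l+2} = F_{k+1} F_{l+2} + F_k F_{l+1}` splits
`(k+l+2)_F! / ((k+1)_F! (l+1)_F!)` into a Pascal-type recurrence for `G k l = (k+l choose k)_F`:
`G (k+1) (l+1) = F_{l+2} G k (l+1) + F_k G (k+1) l`. Taking this recurrence as the definition
of `G` makes it a natural number by construction, and induction along it shows
`k_F! l_F! G k l = (k+l)_F!`.
-/

open Nat

lemma fibFact_zero : fibFact 0 = 1 := rfl

lemma fibFact_succ (n : ℕ) : fibFact (n + 1) = fibFact n * fib (n + 1) :=
  Finset.prod_range_succ _ _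

lemma fibFact_pos (n : ℕ) : 0 < fibFact n :=
  Finset.prod_pos fun i _ => fib_pos.2 i.succ_pos

/-- `fibonomial k l` is the Fibonomial coefficient `(k + l choose k)_F`. -/
def fibonomial : ℕ → ℕ → ℕ
  | 0, _ => 1
  | _ + 1, 0 => 1
  | k + 1, l + 1 => fib (l + 2) * fibonomial k (l + 1) + fib k * fibonomial (k + 1) l
termination_by k l => k + l

lemma fibFact_mul_fibFact_mul_fibonomial (k l : ℕ) :
    fibFact k * fibFact l * fibonomial k l = fibFact (k + l) := by
  induction k, l using fibonomial.induct with
  | case1 l => simp [fibonomial, fibFact_zero]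
  | case2 k => simp [fibonomial, fibFact_zero]
  | case3 k l ih₁ ih₂ =>
    have hfib : fib (k + l + 2) = fib (k + 1) * fib (l + 2) + fib k * fib (l + 1) := by
      rw [show k + l + 2 = k + (l + 1) + 1 by ring, fib_add]
      ring
    rw [show k + (l + 1) = k + l + 1 by ring, fibFact_succ l] at ih₁
    rw [show k + 1 + l = k + l + 1 by ring, fibFact_succ k] at ih₂
    rw [show k.succ + l.succ = k + l + 1 + 1 by omega, fibonomial, fibFact_succ k, fibFact_succ l,
      fibFact_succ (k + l + 1), hfib]
    linear_combination (fib (k + 1) * fib (l + 2)) * ih₁ + (fib k * fib (l + 1)) * ih₂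

lemma fibonomial_pos (k l : ℕ) : 0 < fibonomial k l := by
  have := fibFact_mul_fibFact_mul_fibonomial k l ▸ fibFact_pos (k + l)
  exact Nat.pos_of_mul_pos_left this

lemma fibBinom_add_left (k l : ℕ) : fibBinom (k + l) k = fibonomial k l := by
  rw [fibBinom, if_pos (Nat.le_add_right k l), Nat.add_sub_cancel_left,
    ← fibFact_mul_fibFact_mul_fibonomial k l]
  have hk : (fibFact k : ℚ) ≠ 0 := by exact_mod_cast (fibFact_pos k).ne'
  have hl : (fibFact l : ℚ) ≠ 0 := by exact_mod_cast (fibFact_pos l).ne'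
  push_cast
  field_simp

/-- `k_F!·(n-k)_F!` divides `n_F!`, so every Fibonomial coefficient is a
positive integer. -/
theorem fibFact_mul_fibFact_dvd (n k : ℕ) (hk : k ≤ n) :
    fibFact k * fibFact (n - k) ∣ fibFact n ∧
    ∃ c : ℕ, 0 < c ∧ fibBinom n k = (c : ℚ) := by
  obtain ⟨l, rfl⟩ := Nat.exists_eq_add_of_le hk
  rw [Nat.add_sub_cancel_left]
  exact ⟨⟨fibonomial k l, (fibFact_mul_fibFact_mul_fibonomial k l).symm⟩,
    fibonomial k l, fibonomial_pos k l, fibBinom_add_left k l⟩
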